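/- Let (C, m) be a finite weighted graph with at least two vertices, and let H be a nonzero real Hilbert space. Then the bottom of the spectrum of (C, m) with values in H equals the bottom of the spectrum of (C, m) with values in ℝ: the infimum over nonconstant maps g : C⁰ → H of [Σ_{edges {u,w}} m({u,w}) ‖g(u) − g(w)‖²] / [Σ_{vertices v} m(v) ‖g(v) − bar_m(g)‖²] equals the same infimum taken over nonconstant functions g : C⁰ → ℝ, where bar_m(g) = (Σ_v m(v) g(v)) / (Σ_v m(v)). -/
import Mathlib


section

variable {V : Type*} [Fintype V] (G : SimpleGraph V) [DecidableRel G.Adj] (w : V → V → ℝ)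

/-- The weight of a vertex: the sum of the weights of the edges containing it. -/
noncomputable def vertexWeight (v : V) : ℝ := ∑ u : V, if G.Adj v u then w v u else 0

/-- The energy of a map g from the vertices to an inner product space:
the sum over edges of the weight times the squared norm of the difference of values. -/
noncomputable def graphEnergy {H : Type*} [NormedAddCommGroup H] [InnerProductSpace ℝ H]
    (g : V → H) : ℝ :=
  (1 / 2) * ∑ u : V, ∑ v : V, if G.Adj u v then w u v * ‖g u - g v‖ ^ 2 else 0

/-- The weighted barycenter of a map g from the vertices to an inner product space. -/
noncomputable def graphBarycenter {H : Type*} [NormedAddCommGroup H]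
    [InnerProductSpace ℝ H] (g : V → H) : H :=
  (∑ v : V, vertexWeight G w v)⁻¹ • ∑ v : V, vertexWeight G w v • g v

/-- The bottom of the spectrum of the weighted graph (G, w) with values in H:
the infimum of Rayleigh quotients over nonconstant maps g : V → H. -/
noncomputable def bottomOfSpectrum (H : Type*) [NormedAddCommGroup H]
    [InnerProductSpace ℝ H] : ℝ :=
  sInf ((fun g : V → H =>
      graphEnergy G w g /
        ∑ v : V, vertexWeight G w v * ‖g v - graphBarycenter G w g‖ ^ 2) ''
    {g | ¬ ∀ a b, g a = g b})

-- auxiliary lemmas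

lemma aux_vw_pos (hpos : ∀ u v : V, G.Adj u v → 0 < w u v)
    (hcover : ∀ v : V, ∃ u : V, G.Adj v u) (v : V) : 0 < vertexWeight G w v := by
  obtain ⟨u, hu⟩ := hcover v
  apply Finset.sum_pos'
  · intro i _
    by_cases h : G.Adj v i
    · simp [h, (hpos _ _ h).le]
    · simp [h]
  · exact ⟨u, Finset.mem_univ u, by simp [hu, hpos _ _ hu]⟩

lemma aux_energy_nonneg (hpos : ∀ u v : V, G.Adj u v → 0 < w u v)
    {H : Type*} [NormedAddCommGroup H] [InnerProductSpace ℝ H] (g : V → H) :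
    0 ≤ graphEnergy G w g := by
  unfold graphEnergy
  apply mul_nonneg (by norm_num)
  refine Finset.sum_nonneg fun u _ => Finset.sum_nonneg fun v _ => ?_
  by_cases h : G.Adj u v
  · simp only [h, if_true]
    exact mul_nonneg (hpos u v h).le (by positivity)
  · simp [h]

lemma aux_var_nonneg (hpos : ∀ u v : V, G.Adj u v → 0 < w u v)
    (hcover : ∀ v : V, ∃ u : V, G.Adj v u)
    {H : Type*} [NormedAddCommGroup H] [InnerProductSpace ℝ H] (g : V → H) :
    0 ≤ ∑ v : V, vertexWeight G w v * ‖g v - graphBarycenter G w g‖ ^ 2 :=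
  Finset.sum_nonneg fun v _ =>
    mul_nonneg (aux_vw_pos G w hpos hcover v).le (by positivity)

lemma aux_var_pos (hpos : ∀ u v : V, G.Adj u v → 0 < w u v)
    (hcover : ∀ v : V, ∃ u : V, G.Adj v u)
    {H : Type*} [NormedAddCommGroup H] [InnerProductSpace ℝ H] {g : V → H}
    (hg : ¬ ∀ a b, g a = g b) :
    0 < ∑ v : V, vertexWeight G w v * ‖g v - graphBarycenter G w g‖ ^ 2 := by
  rcases (aux_var_nonneg G w hpos hcover g).lt_or_eq with h | h
  · exact h
  · exfalso
    apply hg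
    have hz := (Finset.sum_eq_zero_iff_of_nonneg
      (fun v _ => mul_nonneg (aux_vw_pos G w hpos hcover v).le (by positivity))).mp h.symm
    have hc : ∀ v : V, g v = graphBarycenter G w g := by
      intro v
      have := hz v (Finset.mem_univ v)
      have h2 : ‖g v - graphBarycenter G w g‖ ^ 2 = 0 := by
        rcases mul_eq_zero.mp this with h' | h'
        · exact absurd h' (aux_vw_pos G w hpos hcover v).ne'
        · exact h'
      have h3 : ‖g v - graphBarycenter G w g‖ = 0 :=
        pow_eq_zero_iff (n := 2) (by norm_num) |>.mp h2
      rw [norm_eq_zero, sub_eq_zero] at h3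
      exact h3
    intro a b; rw [hc a, hc b]

lemma aux_quot_nonneg (hpos : ∀ u v : V, G.Adj u v → 0 < w u v)
    (hcover : ∀ v : V, ∃ u : V, G.Adj v u)
    {H : Type*} [NormedAddCommGroup H] [InnerProductSpace ℝ H] (g : V → H) :
    0 ≤ graphEnergy G w g /
        ∑ v : V, vertexWeight G w v * ‖g v - graphBarycenter G w g‖ ^ 2 :=
  div_nonneg (aux_energy_nonneg G w hpos g) (aux_var_nonneg G w hpos hcover g)

lemma aux_bary_map {H : Type*} [NormedAddCommGroup H] [InnerProductSpace ℝ H]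
    {H' : Type*} [NormedAddCommGroup H'] [InnerProductSpace ℝ H'] (L : H →ₗ[ℝ] H')
    (g : V → H) :
    graphBarycenter G w (fun v => L (g v)) = L (graphBarycenter G w g) := by
  unfold graphBarycenter
  rw [map_smul, map_sum]
  simp [map_smul]

lemma aux_sum_vw_pos [Nonempty V] (hpos : ∀ u v : V, G.Adj u v → 0 < w u v)
    (hcover : ∀ v : V, ∃ u : V, G.Adj v u) : 0 < ∑ v : V, vertexWeight G w v :=
  Finset.sum_pos (fun v _ => aux_vw_pos G w hpos hcover v) Finset.univ_nonempty

lemma aux_bary_const {H : Type*} [NormedAddCommGroup H] [InnerProductSpace ℝ H]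
    (hs : (∑ v : V, vertexWeight G w v) ≠ 0) (c : H) :
    graphBarycenter G w (fun _ => c) = c := by
  unfold graphBarycenter
  rw [← Finset.sum_smul, inv_smul_smul₀ hs]

lemma aux_energy_smul {H : Type*} [NormedAddCommGroup H] [InnerProductSpace ℝ H]
    (e : H) (g : V → ℝ) :
    graphEnergy G w (fun v => g v • e) = ‖e‖ ^ 2 * graphEnergy G w g := by
  unfold graphEnergy
  have key : ∀ u v : V, (if G.Adj u v then w u v * ‖g u • e - g v • e‖ ^ 2 else 0)
      = ‖e‖ ^ 2 * (if G.Adj u v then w u v * ‖g u - g v‖ ^ 2 else 0) := by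
    intro u v
    split_ifs with h
    · rw [← sub_smul, norm_smul]; ring
    · simp
  simp_rw [key, ← Finset.mul_sum]
  ring

lemma aux_var_smul {H : Type*} [NormedAddCommGroup H] [InnerProductSpace ℝ H]
    (e : H) (g : V → ℝ) :
    ∑ v : V, vertexWeight G w v * ‖g v • e - graphBarycenter G w (fun v => g v • e)‖ ^ 2
      = ‖e‖ ^ 2 * ∑ v : V, vertexWeight G w v * ‖g v - graphBarycenter G w g‖ ^ 2 := by
  have hb : graphBarycenter G w (fun v => g v • e) = graphBarycenter G w g • e := by
    have := aux_bary_map G w (LinearMap.toSpanSingleton ℝ H e) g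
    simpa [LinearMap.toSpanSingleton_apply] using this
  rw [hb, Finset.mul_sum]
  refine Finset.sum_congr rfl fun v _ => ?_
  rw [← sub_smul, norm_smul]
  ring

lemma aux_smul_quot {H : Type*} [NormedAddCommGroup H] [InnerProductSpace ℝ H]
    {e : H} (he : e ≠ 0) (g : V → ℝ) :
    graphEnergy G w (fun v => g v • e) /
        (∑ v : V, vertexWeight G w v *
          ‖g v • e - graphBarycenter G w (fun v => g v • e)‖ ^ 2)
      = graphEnergy G w g /
        ∑ v : V, vertexWeight G w v * ‖g v - graphBarycenter G w g‖ ^ 2 := by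
  rw [aux_energy_smul, aux_var_smul]
  exact mul_div_mul_left _ _ (pow_ne_zero 2 (norm_ne_zero_iff.mpr he))

lemma aux_norm_sq_eucl {n : ℕ} (x : EuclideanSpace ℝ (Fin n)) :
    ‖x‖ ^ 2 = ∑ i, ‖x i‖ ^ 2 := by
  rw [EuclideanSpace.norm_eq, Real.sq_sqrt (by positivity)]

lemma aux_energy_eucl {n : ℕ} (f : V → EuclideanSpace ℝ (Fin n)) :
    graphEnergy G w f = ∑ i, graphEnergy G w (fun v => f v i) := by
  unfold graphEnergy
  have key : ∀ u v : V, (if G.Adj u v then w u v * ‖f u - f v‖ ^ 2 else 0)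
      = ∑ i, if G.Adj u v then w u v * ‖f u i - f v i‖ ^ 2 else 0 := by
    intro u v
    split_ifs with h
    · rw [aux_norm_sq_eucl (f u - f v), Finset.mul_sum]
      rfl
    · simp
  simp_rw [key]
  have h1 : ∀ u : V, (∑ v : V, ∑ i, if G.Adj u v then w u v * ‖f u i - f v i‖ ^ 2 else 0)
      = ∑ i, ∑ v : V, if G.Adj u v then w u v * ‖f u i - f v i‖ ^ 2 else 0 :=
    fun u => Finset.sum_comm
  simp_rw [h1]
  rw [Finset.sum_comm, Finset.mul_sum]

lemma aux_bary_eucl {n : ℕ} (f : V → EuclideanSpace ℝ (Fin n)) (i : Fin n) :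
    graphBarycenter G w (fun v => f v i) = graphBarycenter G w f i := by
  exact aux_bary_map G w ((EuclideanSpace.proj i : EuclideanSpace ℝ (Fin n) →L[ℝ] ℝ).toLinearMap) f

lemma aux_var_eucl {n : ℕ} (f : V → EuclideanSpace ℝ (Fin n)) :
    (∑ v : V, vertexWeight G w v * ‖f v - graphBarycenter G w f‖ ^ 2)
      = ∑ i, ∑ v : V, vertexWeight G w v *
          ‖f v i - graphBarycenter G w (fun v => f v i)‖ ^ 2 := by
  have key : ∀ v : V, vertexWeight G w v * ‖f v - graphBarycenter G w f‖ ^ 2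
      = ∑ i, vertexWeight G w v *
          ‖f v i - graphBarycenter G w (fun v => f v i)‖ ^ 2 := by
    intro v
    rw [aux_norm_sq_eucl (f v - graphBarycenter G w f), Finset.mul_sum]
    refine Finset.sum_congr rfl fun i _ => ?_
    rw [aux_bary_eucl]
    rfl
  simp_rw [key]
  exact Finset.sum_comm

lemma aux_eucl_bound (hcard : 2 ≤ Fintype.card V)
    (hpos : ∀ u v : V, G.Adj u v → 0 < w u v)
    (hcover : ∀ v : V, ∃ u : V, G.Adj v u)
    {n : ℕ} (f : V → EuclideanSpace ℝ (Fin n)) :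
    bottomOfSpectrum G w ℝ *
        (∑ v : V, vertexWeight G w v * ‖f v - graphBarycenter G w f‖ ^ 2)
      ≤ graphEnergy G w f := by
  haveI : Nontrivial V := Fintype.one_lt_card_iff_nontrivial.mp (by omega)
  obtain ⟨a, b, hab⟩ := exists_pair_ne V
  set SR := ((fun g : V → ℝ =>
      graphEnergy G w g /
        ∑ v : V, vertexWeight G w v * ‖g v - graphBarycenter G w g‖ ^ 2) ''
    {g | ¬ ∀ a b, g a = g b}) with hSR
  classical
  have hne : SR.Nonempty := by
    refine ⟨_, ⟨fun v => if v = a then (1 : ℝ) else 0, fun hc => ?_, rfl⟩⟩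
    have := hc a b
    simp [hab.symm] at this
  have hbdd : BddBelow SR := by
    refine ⟨0, ?_⟩
    rintro x ⟨g, -, rfl⟩
    exact aux_quot_nonneg G w hpos hcover g
  have hL0 : 0 ≤ bottomOfSpectrum G w ℝ := by
    refine le_csInf hne ?_
    rintro x ⟨g, -, rfl⟩
    exact aux_quot_nonneg G w hpos hcover g
  have hs : (∑ v : V, vertexWeight G w v) ≠ 0 :=
    (aux_sum_vw_pos G w hpos hcover).ne'
  have key : ∀ i : Fin n,
      bottomOfSpectrum G w ℝ *
        (∑ v : V, vertexWeight G w v *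
          ‖f v i - graphBarycenter G w (fun v => f v i)‖ ^ 2)
      ≤ graphEnergy G w (fun v => f v i) := by
    intro i
    by_cases hci : ∀ a b : V, f a i = f b i
    · have hfc : (fun v => f v i) = fun _ => f a i := funext fun v => hci v a
      have hb : graphBarycenter G w (fun v => f v i) = f a i := by
        rw [hfc]; exact aux_bary_const G w hs _
      have hvar : (∑ v : V, vertexWeight G w v *
          ‖f v i - graphBarycenter G w (fun v => f v i)‖ ^ 2) = 0 := by
        refine Finset.sum_eq_zero fun v _ => ?_
        rw [hb, hci v a]
        simp
      have hen : graphEnergy G w (fun v => f v i) = 0 := by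
        rw [hfc]
        unfold graphEnergy
        simp
      rw [hvar, hen, mul_zero]
    · have hmem : graphEnergy G w (fun v => f v i) /
          (∑ v : V, vertexWeight G w v *
            ‖f v i - graphBarycenter G w (fun v => f v i)‖ ^ 2) ∈ SR :=
        ⟨fun v => f v i, hci, rfl⟩
      have hle := csInf_le hbdd hmem
      have hv := aux_var_pos G w hpos hcover (g := fun v => f v i) hci
      calc bottomOfSpectrum G w ℝ *
            (∑ v : V, vertexWeight G w v *
              ‖f v i - graphBarycenter G w (fun v => f v i)‖ ^ 2)
          ≤ (graphEnergy G w (fun v => f v i) /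
              (∑ v : V, vertexWeight G w v *
                ‖f v i - graphBarycenter G w (fun v => f v i)‖ ^ 2)) *
            (∑ v : V, vertexWeight G w v *
              ‖f v i - graphBarycenter G w (fun v => f v i)‖ ^ 2) :=
            mul_le_mul_of_nonneg_right hle hv.le
        _ = graphEnergy G w (fun v => f v i) := div_mul_cancel₀ _ hv.ne'
  calc bottomOfSpectrum G w ℝ *
        (∑ v : V, vertexWeight G w v * ‖f v - graphBarycenter G w f‖ ^ 2)
      = ∑ i, bottomOfSpectrum G w ℝ *
          (∑ v : V, vertexWeight G w v *
            ‖f v i - graphBarycenter G w (fun v => f v i)‖ ^ 2) := by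
        rw [aux_var_eucl, Finset.mul_sum]
    _ ≤ ∑ i, graphEnergy G w (fun v => f v i) := Finset.sum_le_sum fun i _ => key i
    _ = graphEnergy G w f := (aux_energy_eucl G w f).symm

/-- for a finite weighted graph, the bottom of the spectrum with values in
a nonzero real Hilbert space equals the bottom of the spectrum with values in ℝ. -/
theorem bottomOfSpectrum_hilbert_eq_real
    (hcard : 2 ≤ Fintype.card V)
    (hsymm : ∀ u v : V, w u v = w v u)
    (hpos : ∀ u v : V, G.Adj u v → 0 < w u v)
    (hcover : ∀ v : V, ∃ u : V, G.Adj v u)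
    (H : Type*) [NormedAddCommGroup H] [InnerProductSpace ℝ H] [CompleteSpace H]
    [Nontrivial H] :
    bottomOfSpectrum G w H = bottomOfSpectrum G w ℝ := by
  classical
  haveI : Nontrivial V := Fintype.one_lt_card_iff_nontrivial.mp (by omega)
  obtain ⟨a, b, hab⟩ := exists_pair_ne V
  obtain ⟨e, he⟩ := exists_ne (0 : H)
  set QH := fun g : V → H =>
      graphEnergy G w g /
        ∑ v : V, vertexWeight G w v * ‖g v - graphBarycenter G w g‖ ^ 2 with hQH
  set QR := fun g : V → ℝ =>
      graphEnergy G w g /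
        ∑ v : V, vertexWeight G w v * ‖g v - graphBarycenter G w g‖ ^ 2 with hQR
  set SH := QH '' {g | ¬ ∀ a b, g a = g b} with hSH
  set SR := QR '' {g | ¬ ∀ a b, g a = g b} with hSRdef
  have hg0 : ¬ ∀ a' b' : V, (fun v : V => if v = a then (1:ℝ) else 0) a'
      = (fun v : V => if v = a then (1:ℝ) else 0) b' := by
    intro hc
    have := hc a b
    simp [hab.symm] at this
  have hsmul_nc : ∀ (g : V → ℝ), (¬ ∀ a' b', g a' = g b') →
      ¬ ∀ a' b' : V, g a' • e = g b' • e := by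
    intro g hg hc
    apply hg
    intro a' b'
    have := hc a' b'
    have h2 : (g a' - g b') • e = 0 := by rw [sub_smul, this, sub_self]
    rcases smul_eq_zero.mp h2 with h | h
    · exact sub_eq_zero.mp h
    · exact absurd h he
  have hsub : SR ⊆ SH := by
    rintro x ⟨g, hg, rfl⟩
    exact ⟨fun v => g v • e, hsmul_nc g hg, aux_smul_quot G w he g⟩
  have hneR : SR.Nonempty :=
    ⟨_, ⟨fun v => if v = a then (1:ℝ) else 0, hg0, rfl⟩⟩
  have hneH : SH.Nonempty := hneR.mono hsub
  have hbddH : BddBelow SH := by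
    refine ⟨0, ?_⟩
    rintro x ⟨g, -, rfl⟩
    exact aux_quot_nonneg G w hpos hcover g
  refine le_antisymm (csInf_le_csInf hbddH hneR hsub) (le_csInf hneH ?_)
  rintro x ⟨g, hg, rfl⟩
  -- reduce to a Euclidean space
  set S := Submodule.span ℝ (Set.range g) with hS
  haveI : FiniteDimensional ℝ S := FiniteDimensional.span_of_finite ℝ (Set.finite_range g)
  set bS := stdOrthonormalBasis ℝ S with hbS
  set g' : V → S := fun v => ⟨g v, Submodule.subset_span ⟨v, rfl⟩⟩ with hg'
  set f : V → EuclideanSpace ℝ (Fin (Module.finrank ℝ S)) := fun v => bS.repr (g' v) with hf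
  have hbar1 : graphBarycenter G w g = ((graphBarycenter G w g' : S) : H) := by
    have := aux_bary_map G w S.subtype g'
    simp only [Submodule.coe_subtype] at this
    exact this
  have hbar2 : graphBarycenter G w f = bS.repr (graphBarycenter G w g') := by
    have := aux_bary_map G w (bS.repr.toLinearEquiv : S →ₗ[ℝ] EuclideanSpace ℝ (Fin (Module.finrank ℝ S))) g'
    simp only [LinearEquiv.coe_coe, LinearIsometryEquiv.coe_toLinearEquiv] at this
    exact this
  have hnormsub : ∀ u v : V, ‖f u - f v‖ = ‖g u - g v‖ := by
    intro u v
    rw [hf]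
    rw [← LinearIsometryEquiv.map_sub, LinearIsometryEquiv.norm_map]
    rfl
  have hE : graphEnergy G w f = graphEnergy G w g := by
    unfold graphEnergy
    congr 1
    refine Finset.sum_congr rfl fun u _ => Finset.sum_congr rfl fun v _ => ?_
    by_cases h : G.Adj u v
    · simp [h, hnormsub u v]
    · simp [h]
  have hVar : (∑ v : V, vertexWeight G w v * ‖f v - graphBarycenter G w f‖ ^ 2)
      = ∑ v : V, vertexWeight G w v * ‖g v - graphBarycenter G w g‖ ^ 2 := by
    refine Finset.sum_congr rfl fun v _ => ?_
    congr 2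
    rw [hbar2, hf, ← LinearIsometryEquiv.map_sub, LinearIsometryEquiv.norm_map, hbar1]
    rfl
  have hfnc : ¬ ∀ a' b', f a' = f b' := by
    intro hc
    apply hg
    intro a' b'
    have := hc a' b'
    rw [hf] at this
    have h2 : g' a' = g' b' := bS.repr.injective this
    exact Subtype.ext_iff.mp h2
  have hvp : 0 < ∑ v : V, vertexWeight G w v * ‖g v - graphBarycenter G w g‖ ^ 2 :=
    aux_var_pos G w hpos hcover hg
  have hbound := aux_eucl_bound G w hcard hpos hcover f
  rw [hE, hVar] at hbound
  have hfin : bottomOfSpectrum G w ℝ ≤ graphEnergy G w g /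
      ∑ v : V, vertexWeight G w v * ‖g v - graphBarycenter G w g‖ ^ 2 :=
    (le_div_iff₀ hvp).mpr hbound
  exact hfin


end
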